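/- arXiv:2009.03174 — 4 statements merged into one kernel-verified Lean document; each statement's English description precedes it below -/
import Mathlib

section
/- For all a, b ∈ ZMod (p² − 1), the following are equivalent: (i) either (p·a = −a and p·b = −b) or (p·a = −b and p·b = −a); (ii) either (there exist a', b' ∈ ZMod (p² − 1) with a = (1 − p)·a' and b = (1 − p)·b') or b = −p·a. -/
/-!
In `ZMod (p ^ 2 - 1)` the equation `p * x = -x` says `(p + 1) * x = 0`, and since
`p ^ 2 - 1 = (p + 1) * (p - 1)` its solutions are exactly the multiples of `p - 1`.
Because `p * p = 1`, the two equations `p * a = -b` and `p * b = -a` are equivalent,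
and each says `b = -(p * a)`.
-/

namespace ZMod

theorem natCast_mul_eq_zero_iff_of_eq_mul {n u v : ℕ} (h : n = u * v) (hu : u ≠ 0)
    (x : ZMod n) : (u : ZMod n) * x = 0 ↔ ∃ y, x = v * y := by
  subst h
  constructor
  · intro hx
    obtain ⟨k, rfl⟩ := ZMod.intCast_surjective x
    have huk : ((u * v : ℕ) : ℤ) ∣ u * k := by
      rw [← ZMod.intCast_zmod_eq_zero_iff_dvd]
      push_cast
      exact hx
    push_cast at huk
    obtain ⟨m, hm⟩ := (mul_dvd_mul_iff_left (Int.natCast_ne_zero.mpr hu)).mp huk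
    exact ⟨m, by rw [hm]; push_cast; ring⟩
  · rintro ⟨y, rfl⟩
    rw [← mul_assoc, ← Nat.cast_mul, ZMod.natCast_self, zero_mul]

theorem natCast_mul_self_eq_one {p : ℕ} (hp : p ≠ 0) : (p : ZMod (p ^ 2 - 1)) * p = 1 := by
  have h := ZMod.natCast_self (p ^ 2 - 1)
  push_cast [Nat.cast_sub (Nat.one_le_pow 2 p (Nat.pos_of_ne_zero hp))] at h
  linear_combination h

theorem natCast_mul_eq_neg_iff {p : ℕ} (hp : p ≠ 0) (x : ZMod (p ^ 2 - 1)) :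
    (p : ZMod (p ^ 2 - 1)) * x = -x ↔ ∃ y, x = (1 - (p : ZMod (p ^ 2 - 1))) * y := by
  have hsq : p ^ 2 - 1 = (p + 1) * (p - 1) := by
    simpa [pow_two] using Nat.sq_sub_sq p 1
  have hsub : ((p - 1 : ℕ) : ZMod (p ^ 2 - 1)) = p - 1 := by
    rw [Nat.cast_sub (Nat.one_le_iff_ne_zero.mpr hp), Nat.cast_one]
  calc (p : ZMod (p ^ 2 - 1)) * x = -x
      ↔ ((p + 1 : ℕ) : ZMod (p ^ 2 - 1)) * x = 0 := by
        rw [Nat.cast_succ, add_one_mul, add_eq_zero_iff_eq_neg]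
    _ ↔ ∃ y, x = ((p - 1 : ℕ) : ZMod (p ^ 2 - 1)) * y :=
        natCast_mul_eq_zero_iff_of_eq_mul hsq (Nat.succ_ne_zero p) x
    _ ↔ ∃ y, x = (1 - (p : ZMod (p ^ 2 - 1))) * y := by
        rw [hsub]
        constructor <;> rintro ⟨y, rfl⟩ <;> exact ⟨-y, by ring⟩

end ZMod

theorem mul_eq_neg_and_mul_eq_neg_iff {R : Type*} [CommRing R] {u : R} (hu : u * u = 1)
    (a b : R) : (u * a = -b ∧ u * b = -a) ↔ b = -(u * a) := by
  constructor
  · rintro ⟨hab, -⟩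
    rw [hab, neg_neg]
  · rintro rfl
    exact ⟨(neg_neg _).symm, by linear_combination (-a) * hu⟩

/-- Let `p` be a prime and work in `ZMod (p² − 1)`.  For all
`a, b : ZMod (p² − 1)`, the following are equivalent:
(i) either (`p·a = −a` and `p·b = −b`) or (`p·a = −b` and `p·b = −a`);
(ii) either there exist `a', b'` with `a = (1 − p)·a'` and `b = (1 − p)·b'`, or `b = −p·a`.
(This encodes the classification of Frobenius-twist self-dual principal series inertial
types.) -/
theorem frobenius_twist_self_dual_classification (p : ℕ) (hp : p.Prime)
    (a b : ZMod (p ^ 2 - 1)) :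
    ((((p : ZMod (p ^ 2 - 1)) * a = -a) ∧ ((p : ZMod (p ^ 2 - 1)) * b = -b)) ∨
      (((p : ZMod (p ^ 2 - 1)) * a = -b) ∧ ((p : ZMod (p ^ 2 - 1)) * b = -a))) ↔
    ((∃ a' b' : ZMod (p ^ 2 - 1),
        a = (1 - (p : ZMod (p ^ 2 - 1))) * a' ∧ b = (1 - (p : ZMod (p ^ 2 - 1))) * b') ∨
      b = -((p : ZMod (p ^ 2 - 1)) * a)) := by
  rw [ZMod.natCast_mul_eq_neg_iff hp.ne_zero, ZMod.natCast_mul_eq_neg_iff hp.ne_zero,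
    mul_eq_neg_and_mul_eq_neg_iff (ZMod.natCast_mul_self_eq_one hp.ne_zero)]
  simp only [exists_and_left, exists_and_right]
end

section
/- Let p be a prime and let r, a, b be integers. If p + r ≡ a(1 − p) (mod p² − 1) and −p·r ≡ b(1 − p) + p (mod p² − 1), then (p + 1) divides (a − b + 1). -/
/-! Adding `p` times the first congruence to the second eliminates `r`, leaving
`(p - 1) p ≡ (p - 1)(-(p a + b)) (mod (p - 1)(p + 1))`. Cancelling `p - 1 ≠ 0` gives
`p ≡ -(p a + b) (mod p + 1)`, and since `p ≡ -1 (mod p + 1)` this is `a - b + 1 ≡ 0`. -/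

theorem Int.sub_one_mul_modEq_of_add_modEq_of_neg_mul_modEq {p r a b : ℤ}
    (h1 : p + r ≡ a * (1 - p) [ZMOD p ^ 2 - 1])
    (h2 : -(p * r) ≡ b * (1 - p) + p [ZMOD p ^ 2 - 1]) :
    (p - 1) * p ≡ (p - 1) * -(p * a + b) [ZMOD (p - 1) * (p + 1)] := by
  have h := ((h1.mul_left p).add h2).sub_right p
  rw [show (p - 1) * (p + 1) = p ^ 2 - 1 by ring]
  convert h using 1 <;> ring

theorem Int.add_one_dvd_sub_add_one_of_modEq {p a b : ℤ}
    (h : p ≡ -(p * a + b) [ZMOD p + 1]) : p + 1 ∣ a - b + 1 := by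
  rw [show a - b + 1 = (p + 1) * (a + 1) + (-(p * a + b) - p) by ring]
  exact dvd_add (dvd_mul_right _ _) h.dvd

/-- Let `p` be a prime and `r, a, b` integers.  If
`p + r ≡ a(1 − p) (mod p² − 1)` and `−p·r ≡ b(1 − p) + p (mod p² − 1)`, then
`p + 1` divides `a − b + 1`.  (Case 1 in the proof that an `n`-generic
non-supercuspidal `C`-parameter has trivial Weyl element.) -/
theorem case_one_divisibility (p : ℕ) (hp : p.Prime) (r a b : ℤ)
    (h1 : (p : ℤ) + r ≡ a * (1 - (p : ℤ)) [ZMOD (p : ℤ) ^ 2 - 1])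
    (h2 : -((p : ℤ) * r) ≡ b * (1 - (p : ℤ)) + p [ZMOD (p : ℤ) ^ 2 - 1]) :
    ((p : ℤ) + 1) ∣ (a - b + 1) := by
  have hp1 : (p : ℤ) - 1 ≠ 0 := by
    have := hp.two_le
    omega
  exact Int.add_one_dvd_sub_add_one_of_modEq <|
    Int.ModEq.mul_left_cancel' hp1 (Int.sub_one_mul_modEq_of_add_modEq_of_neg_mul_modEq h1 h2)
end

section
/- Let p be a prime and let r, a, b be integers. If −p·r ≡ a + 1 − p·a (mod p² − 1) and p + 1 + r ≡ b + p(1 − b) (mod p² − 1), then (p + 1) divides a + p·b + 1, and consequently (p + 1) also divides a − b + 1. -/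
/-!
Adding the two congruences, the terms `p + 1` cancel and what remains is
`(p - 1) r ≡ (p - 1)(a + b) (mod (p - 1)(p + 1))`, so `r ≡ a + b (mod p + 1)`.
Reducing the second congruence modulo `p + 1`, where `p ≡ -1`, gives `r ≡ 2b - 1`,
hence `a - b + 1 ≡ 0`, and `a + p b + 1 ≡ a - b + 1 (mod p + 1)`.
-/

namespace CaseTwo

theorem modEq_add_of_modEq_sq_sub_one {q r a b : ℤ} (hq : q ≠ 1)
    (h1 : -(q * r) ≡ a + 1 - q * a [ZMOD q ^ 2 - 1])
    (h2 : q + 1 + r ≡ b + q * (1 - b) [ZMOD q ^ 2 - 1]) :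
    r ≡ a + b [ZMOD q + 1] := by
  have hsum : (q - 1) * (q + 1) ∣ (q - 1) * (r - (a + b)) := by
    convert (h1.add h2).dvd using 1 <;> ring
  exact (Int.modEq_iff_dvd.2 ((mul_dvd_mul_iff_left (sub_ne_zero.2 hq)).1 hsum)).symm

theorem dvd_add_mul_add_one_of_modEq_sq_sub_one {q r a b : ℤ} (hq : q ≠ 1)
    (h1 : -(q * r) ≡ a + 1 - q * a [ZMOD q ^ 2 - 1])
    (h2 : q + 1 + r ≡ b + q * (1 - b) [ZMOD q ^ 2 - 1]) :
    q + 1 ∣ a + q * b + 1 := by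
  have hr : q + 1 ∣ a + b - r := (modEq_add_of_modEq_sq_sub_one hq h1 h2).dvd
  have h2' : q + 1 ∣ b + q * (1 - b) - (q + 1 + r) :=
    (Dvd.intro_left (q - 1) (by ring)).trans h2.dvd
  rw [show a + q * b + 1 = a + b - r - (b + q * (1 - b) - (q + 1 + r)) by ring]
  exact dvd_sub hr h2'

theorem dvd_add_mul_add_one_iff {q a b : ℤ} :
    q + 1 ∣ a + q * b + 1 ↔ q + 1 ∣ a - b + 1 := by
  rw [show a + q * b + 1 = a - b + 1 + (q + 1) * b by ring]
  exact dvd_add_left (dvd_mul_right _ _)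

end CaseTwo

/-- Let `p` be a prime and `r, a, b` integers.  If
`−p·r ≡ a + 1 − p·a (mod p² − 1)` and `p + 1 + r ≡ b + p(1 − b) (mod p² − 1)`, then
`p + 1` divides `a + p·b + 1`, and consequently `p + 1` also divides `a − b + 1`.
(Case 2 in the proof that an `n`-generic non-supercuspidal `C`-parameter has trivial
Weyl element.) -/
theorem case_two_divisibility (p : ℕ) (hp : p.Prime) (r a b : ℤ)
    (h1 : -((p : ℤ) * r) ≡ a + 1 - (p : ℤ) * a [ZMOD (p : ℤ) ^ 2 - 1])
    (h2 : (p : ℤ) + 1 + r ≡ b + (p : ℤ) * (1 - b) [ZMOD (p : ℤ) ^ 2 - 1]) :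
    ((p : ℤ) + 1) ∣ (a + (p : ℤ) * b + 1) ∧ ((p : ℤ) + 1) ∣ (a - b + 1) := by
  have hp1 : (p : ℤ) ≠ 1 := by exact_mod_cast hp.ne_one
  have h := CaseTwo.dvd_add_mul_add_one_of_modEq_sq_sub_one hp1 h1 h2
  exact ⟨h, CaseTwo.dvd_add_mul_add_one_iff.1 h⟩
end

section
/- Let p be a prime, n ≥ 0 an integer, and a, b ∈ ℤ with n < a − b + 1 < p − n. Then there is no integer r such that the pair (p + 1 + r, −p·r) agrees modulo p² − 1, in either order, with the pair (a + 1 − p·a, b + p(1 − b)); that is, neither [p + 1 + r ≡ a + 1 − p·a and −p·r ≡ b + p(1 − b) (mod p² − 1)] nor [p + 1 + r ≡ b + p(1 − b) and −p·r ≡ a + 1 − p·a (mod p² − 1)] can hold. -/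
/-!
Multiplying the first congruence of either pair by `p` and adding the second eliminates `r`;
since `p² ≡ 1 (mod p² − 1)` this leaves `(p − 1)(a − b + 1) ≡ 0 (mod p² − 1)`, i.e.
`p + 1 ∣ a − b + 1`, which is impossible for `0 < a − b + 1 < p`.
-/

theorem mul_add_modEq_add_one_of_modEq {p r x y : ℤ} (hx : p + 1 + r ≡ x [ZMOD p ^ 2 - 1])
    (hy : -(p * r) ≡ y [ZMOD p ^ 2 - 1]) : p * x + y ≡ p + 1 [ZMOD p ^ 2 - 1] :=
  calc p * x + y ≡ p * (p + 1 + r) + -(p * r) [ZMOD p ^ 2 - 1] := ((hx.mul_left p).add hy).symm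
    _ = p ^ 2 + p := by ring
    _ ≡ 1 + p [ZMOD p ^ 2 - 1] := (Int.modEq_sub (p ^ 2) 1).add_right p
    _ = p + 1 := add_comm 1 p

theorem add_one_dvd_of_sq_sub_one_dvd_mul {p m : ℤ} (hp : p ≠ 1) (h : p ^ 2 - 1 ∣ (p - 1) * m) :
    p + 1 ∣ m := by
  rw [show p ^ 2 - 1 = (p - 1) * (p + 1) by ring] at h
  exact (mul_dvd_mul_iff_left (sub_ne_zero.mpr hp)).mp h

theorem sq_sub_one_dvd_of_weyl_modEq {p r a b : ℤ}
    (h : (p + 1 + r ≡ a + 1 - p * a [ZMOD p ^ 2 - 1] ∧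
        -(p * r) ≡ b + p * (1 - b) [ZMOD p ^ 2 - 1]) ∨
      (p + 1 + r ≡ b + p * (1 - b) [ZMOD p ^ 2 - 1] ∧
        -(p * r) ≡ a + 1 - p * a [ZMOD p ^ 2 - 1])) :
    p ^ 2 - 1 ∣ (p - 1) * (a - b + 1) := by
  rcases h with ⟨hx, hy⟩ | ⟨hx, hy⟩
  · rw [show (p - 1) * (a - b + 1) =
        p * (a + 1 - p * a) + (b + p * (1 - b)) - (p + 1) + (p ^ 2 - 1) * a by ring]
    exact (mul_add_modEq_add_one_of_modEq hx hy).symm.dvd.add (dvd_mul_right _ a)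
  · rw [show (p - 1) * (a - b + 1) =
        p + 1 - (p * (b + p * (1 - b)) + (a + 1 - p * a)) + (p ^ 2 - 1) * (1 - b) by ring]
    exact (mul_add_modEq_add_one_of_modEq hx hy).dvd.add (dvd_mul_right _ (1 - b))

theorem generic_nonsupercuspidal_has_trivial_weyl_element_general (p : ℕ)
    (n : ℤ) (hn : 0 ≤ n) (a b : ℤ)
    (h1 : n < a - b + 1) (h2 : a - b + 1 < (p : ℤ) - n) :
    ¬ ∃ r : ℤ,
      (((p : ℤ) + 1 + r ≡ a + 1 - (p : ℤ) * a [ZMOD (p : ℤ) ^ 2 - 1] ∧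
        -((p : ℤ) * r) ≡ b + (p : ℤ) * (1 - b) [ZMOD (p : ℤ) ^ 2 - 1]) ∨
       ((p : ℤ) + 1 + r ≡ b + (p : ℤ) * (1 - b) [ZMOD (p : ℤ) ^ 2 - 1] ∧
        -((p : ℤ) * r) ≡ a + 1 - (p : ℤ) * a [ZMOD (p : ℤ) ^ 2 - 1])) := by
  rintro ⟨r, h⟩
  have hdvd : (p : ℤ) + 1 ∣ a - b + 1 :=
    add_one_dvd_of_sq_sub_one_dvd_mul (by omega) (sq_sub_one_dvd_of_weyl_modEq h)
  have hle := Int.le_of_dvd (by omega) hdvd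
  omega

/-- Let `p` be a prime, `n ≥ 0` an integer, and `a, b` integers with
`n < a − b + 1 < p − n`.  Then there is no integer `r` such that the pair
`(p + 1 + r, −p·r)` agrees modulo `p² − 1`, in either order, with the pair
`(a + 1 − p·a, b + p(1 − b))`.  (Combined arithmetic form of Lemma 5.4: an `n`-generic
non-supercuspidal `C`-parameter has trivial Weyl element.) -/
theorem generic_nonsupercuspidal_has_trivial_weyl_element (p : ℕ) (hp : p.Prime)
    (n : ℤ) (hn : 0 ≤ n) (a b : ℤ)
    (h1 : n < a - b + 1) (h2 : a - b + 1 < (p : ℤ) - n) :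
    ¬ ∃ r : ℤ,
      (((p : ℤ) + 1 + r ≡ a + 1 - (p : ℤ) * a [ZMOD (p : ℤ) ^ 2 - 1] ∧
        -((p : ℤ) * r) ≡ b + (p : ℤ) * (1 - b) [ZMOD (p : ℤ) ^ 2 - 1]) ∨
       ((p : ℤ) + 1 + r ≡ b + (p : ℤ) * (1 - b) [ZMOD (p : ℤ) ^ 2 - 1] ∧
        -((p : ℤ) * r) ≡ a + 1 - (p : ℤ) * a [ZMOD (p : ℤ) ^ 2 - 1])) :=
  generic_nonsupercuspidal_has_trivial_weyl_element_general p n hn a b h1 h2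
end
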